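/- Let Y be a dense linear order without endpoints, X an infinite set, and g : X × Y → Y with g(x,y) ≤ y for all x,y and each g(·,y) surjective onto {z : z ≤ y}. If additionally |X| = κ for an infinite cardinal κ, then |Y| ≤ κ⁺, and there exist such X, Y, g with |Y| = κ⁺ (for example, take Y of order type a κ⁺-like dense order in which every initial segment has cardinality at most κ). -/

import Mathlib

/-!
If every initial segment `Iic y` of a linear order has at most `κ` elements, then any `κ⁺` elements
of it are unbounded, so the initial segments below them cover the order, which therefore has at
most `κ⁺ · κ = κ⁺` elements. Surjectivity of `g(·, y)` bounds `#(Iic y)` by `#X = κ`.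

Conversely, in `κ⁺ ×ₗ ℚ` every initial segment has at most `κ · ℵ₀ = κ` elements, so `X` maps onto
each of them, and these surjections assemble to the required `g`.
-/

open Cardinal Set

universe u

theorem Cardinal.mk_le_mul_of_isCofinal {Y : Type u} [Preorder Y] {κ : Cardinal.{u}} {S : Set Y}
    (hS : IsCofinal S) (h : ∀ y : Y, #(Iic y) ≤ κ) : #Y ≤ #S * κ := by
  have hcover : (Set.univ : Set Y) ⊆ ⋃ s ∈ S, Iic s := fun y _ => by
    obtain ⟨s, hs, hys⟩ := hS y
    exact mem_biUnion hs hys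
  calc #Y = #(Set.univ : Set Y) := mk_univ.symm
    _ ≤ #(⋃ s ∈ S, Iic s) := mk_le_mk_of_subset hcover
    _ ≤ #S * ⨆ s : S, #(Iic (s : Y)) := mk_biUnion_le _ _
    _ ≤ #S * κ := by gcongr; exact ciSup_le' fun s => h s

theorem Cardinal.mk_le_succ_of_forall_mk_Iic_le {Y : Type u} [LinearOrder Y] {κ : Cardinal.{u}}
    (hκ : ℵ₀ ≤ κ) (h : ∀ y : Y, #(Iic y) ≤ κ) : #Y ≤ Order.succ κ := by
  by_contra! hlt
  obtain ⟨S, hS⟩ := le_mk_iff_exists_set.mp hlt.le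
  have hcof : IsCofinal S := by
    intro y
    by_contra! hy
    have : #S ≤ #(Iic y) := mk_le_mk_of_subset fun s hs => (hy s hs).le
    exact (Order.lt_succ κ).not_ge (hS ▸ this.trans (h y))
  have := mk_le_mul_of_isCofinal hcof h
  rw [hS, mul_eq_left (hκ.trans (Order.le_succ κ)) (Order.le_succ κ) (aleph0_pos.trans_le hκ).ne']
    at this
  exact hlt.not_ge this

theorem Cardinal.mk_Iic_toType_succ_ord_le {κ : Cardinal.{u}} (hκ : ℵ₀ ≤ κ)
    (a : (Order.succ κ).ord.ToType) : #(Iic a) ≤ κ := by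
  have := mk_Iic_lt a (by simp) (by simpa using hκ.trans (Order.le_succ κ))
  simpa [Order.lt_succ_iff] using this

theorem Prod.Lex.mk_Iic_le {α : Type u} {β : Type*} [Preorder α] [Preorder β] (x : α ×ₗ β) :
    #(Iic x) ≤ lift #(Iic (ofLex x).1) * lift #β := by
  rw [← mk_prod]
  refine mk_le_of_injective (f := fun z : Iic x =>
    ((⟨(ofLex z.1).1, monotone_fst_ofLex z.2⟩ : Iic (ofLex x).1), (ofLex z.1).2)) ?_
  intro z z' hzz'
  obtain ⟨hfst, hsnd⟩ := Prod.ext_iff.mp hzz'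
  exact Subtype.ext (ofLex.injective (Prod.ext (congrArg Subtype.val hfst) hsnd))

theorem exists_range_eq_Iic {X Y : Type u} [Preorder Y] (h : ∀ y : Y, #(Iic y) ≤ #X) :
    ∃ g : X → Y → Y, ∀ y, range (g · y) = Iic y := by
  have hsurj (y : Y) : ∃ f : X → Iic y, Function.Surjective f :=
    Function.exists_surjective_iff.mpr ⟨⟨fun _ => ⟨y, le_rfl⟩⟩, (le_def _ _).mp (h y)⟩
  choose f hf using hsurj
  refine ⟨fun x y => f y x, fun y => Set.ext fun z => ⟨?_, fun hz => ?_⟩⟩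
  · rintro ⟨x, rfl⟩
    exact (f y x).2
  · obtain ⟨x, hx⟩ := hf y ⟨z, hz⟩
    exact ⟨x, congrArg Subtype.val hx⟩

theorem stmt14_general {X Y : Type u} [LinearOrder Y] (g : X → Y → Y)
    (h1 : ∀ (x : X) (y : Y), g x y ≤ y)
    (h2 : ∀ y z : Y, z ≤ y → ∃ x : X, g x y = z)
    (κ : Cardinal.{u}) (hκ : ℵ₀ ≤ κ) (hX : #X = κ) :
    #Y ≤ Order.succ κ ∧
    ∃ (X' Y' : Type u) (r : Y' → Y' → Prop) (g' : X' → Y' → Y'),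
      IsStrictTotalOrder Y' r ∧
      (∀ a b : Y', r a b → ∃ c : Y', r a c ∧ r c b) ∧
      (∀ a : Y', ∃ b : Y', r b a) ∧
      (∀ a : Y', ∃ b : Y', r a b) ∧
      (∀ (x : X') (y : Y'), g' x y = y ∨ r (g' x y) y) ∧
      (∀ y z : Y', (z = y ∨ r z y) → ∃ x : X', g' x y = z) ∧
      #X' = κ ∧ #Y' = Order.succ κ := by
  have hIicY (y : Y) : #(Iic y) ≤ κ := hX ▸ mk_le_of_surjective
    (f := fun x => (⟨g x y, h1 x y⟩ : Iic y)) fun ⟨z, hz⟩ => (h2 y z hz).imp fun _ => Subtype.ext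
  refine ⟨mk_le_succ_of_forall_mk_Iic_le hκ hIicY, ?_⟩
  let Y' := (Order.succ κ).ord.ToType ×ₗ ℚ
  have hIicY' (y : Y') : #(Iic y) ≤ κ := by
    refine (Prod.Lex.mk_Iic_le y).trans ?_
    simpa using mul_le_of_le hκ (mk_Iic_toType_succ_ord_le hκ _) hκ
  obtain ⟨g', hg'⟩ := exists_range_eq_Iic (X := X) (Y := Y') (hX ▸ hIicY')
  refine ⟨X, Y', (· < ·), g', inferInstance, fun _ _ => exists_between, exists_lt, exists_gt,
    fun x y => ?_, fun y z hz => (hg' y).ge (le_iff_eq_or_lt.mpr hz), hX, ?_⟩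
  · exact (show g' x y ≤ y from (hg' y).subset (mem_range_self x)).eq_or_lt
  · change #((Order.succ κ).ord.ToType × ℚ) = _
    have hsucc := hκ.trans (Order.le_succ κ)
    simpa [mk_prod] using mul_eq_left hsucc hsucc aleph0_ne_zero

theorem stmt14 {X Y : Type u} [Infinite X] [LinearOrder Y] [DenselyOrdered Y]
    [NoMinOrder Y] [NoMaxOrder Y] (g : X → Y → Y)
    (h1 : ∀ (x : X) (y : Y), g x y ≤ y)
    (h2 : ∀ y z : Y, z ≤ y → ∃ x : X, g x y = z)
    (κ : Cardinal.{u}) (hκ : ℵ₀ ≤ κ) (hX : #X = κ) :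
    #Y ≤ Order.succ κ ∧
    ∃ (X' Y' : Type u) (r : Y' → Y' → Prop) (g' : X' → Y' → Y'),
      IsStrictTotalOrder Y' r ∧
      (∀ a b : Y', r a b → ∃ c : Y', r a c ∧ r c b) ∧
      (∀ a : Y', ∃ b : Y', r b a) ∧
      (∀ a : Y', ∃ b : Y', r a b) ∧
      (∀ (x : X') (y : Y'), g' x y = y ∨ r (g' x y) y) ∧
      (∀ y z : Y', (z = y ∨ r z y) → ∃ x : X', g' x y = z) ∧
      #X' = κ ∧ #Y' = Order.succ κ :=
  stmt14_general g h1 h2 κ hκ hX
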